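/- (Mass dichotomy, Lemma 2.5.) Let α ∈ [0,1), R > 0, and let λ₂ > λ₁ > 0 be such that U_{λ₁,α} and U_{λ₂,α} take the same value at points of norm R. Let g : [0,R] → ℝ satisfy the interior radial Bol hypothesis with parameter α, and suppose g(R) equals the common value of U_{λ₁,α} and U_{λ₂,α} at points of norm R. Set M = 2π∫₀^R s^{1−2α} e^{g(s)} ds and m_i = ∫_{B_R(0)} |x|^{-2α} e^{U_{λ_i,α}(x)} dx for i = 1,2. Then either M ≤ m₁ or M ≥ m₂. -/

import Mathlib

open Real MeasureTheory Metric Filter Topology RealInnerProductSpace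

noncomputable section

/-- The plane `ℝ²`. -/
abbrev Pl := EuclideanSpace ℝ (Fin 2)

/-- The Laplacian `Δu = ∂²u/∂x₁² + ∂²u/∂x₂²` of a function on `ℝ²`. -/
def lap (u : Pl → ℝ) (x : Pl) : ℝ :=
  ∑ i : Fin 2, fderiv ℝ (fun y => fderiv ℝ u y (EuclideanSpace.single i 1)) x
    (EuclideanSpace.single i 1)

/-- The radial profile of `U_{λ,α}`. -/
def Uval (lam a r : ℝ) : ℝ :=
  Real.log ((lam * (1 - a)) ^ 2 / (1 + lam ^ 2 / 8 * r ^ (2 * (1 - a))) ^ 2)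

/-- `U_{λ,α}(x) = ln( (λ(1−α))² / (1 + (λ²/8)|x|^{2(1−α)})² )`. -/
def U (lam a : ℝ) (x : Pl) : ℝ := Uval lam a ‖x‖

/-- `g` satisfies the interior radial Bol hypothesis with parameter `a` on `[0,R]`:
it is continuous and strictly decreasing on `[0,R]`, differentiable on `(0,R)`, and
`2πr·(−g'(r)) ≤ 2π∫₀^r s^{1−2a} e^{g(s)} ds` for every `r ∈ (0,R)`. -/
def InteriorBol (a R : ℝ) (g : ℝ → ℝ) : Prop :=
  ContinuousOn g (Set.Icc 0 R) ∧ StrictAntiOn g (Set.Icc 0 R) ∧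
  (∀ r ∈ Set.Ioo (0:ℝ) R, DifferentiableAt ℝ g r) ∧
  (∀ r ∈ Set.Ioo (0:ℝ) R,
    2 * π * r * (-(deriv g r)) ≤ 2 * π * ∫ s in (0:ℝ)..r, s ^ (1 - 2*a) * Real.exp (g s))

/-!
Write `N(r) = ∫₀^r s^{1-2α} e^{g(s)} ds`. The Bol hypothesis says `r g'(r) + N(r) ≥ 0`, which is
exactly the nonnegativity of the derivative of
`E(r) = 2 r^{2(1-α)} e^{g(r)} - N(r) (4(1-α) - N(r))`; since `E(0) = 0` this gives
`N(R) (4(1-α) - N(R)) ≤ 2 R^{2(1-α)} e^{g(R)}`.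

The bubbles are explicit: in polar coordinates `m_λ = 2π · 4(1-α) t / (1 + t)` with
`t = λ² R^{2(1-α)} / 8`, and `U_{λ₁,α} = U_{λ₂,α}` on `|x| = R` forces `λ₁ λ₂ R^{2(1-α)} = 8`, so
`m_i = 2π μ_i` with `μ_i = 4(1-α) λ_i / (λ₁ + λ₂)`. Then `μ₁ + μ₂ = 4(1-α)` and, as
`g(R) = U_{λ₁,α}(R)`, `μ₁ μ₂ = 2 R^{2(1-α)} e^{g(R)}`, so the inequality above reads
`(N(R) - μ₁)(N(R) - μ₂) ≥ 0`.
-/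

theorem integral_ball_fun_norm_eq {R : ℝ} (hR : 0 ≤ R) (f : ℝ → ℝ) :
    ∫ x in ball (0 : Pl) R, f ‖x‖ = 2 * π * ∫ r in (0:ℝ)..R, r * f r := by
  have hball : ∀ x : Pl, (ball (0 : Pl) R).indicator (fun x => f ‖x‖) x
      = (Set.Iio R).indicator f ‖x‖ := fun x => by
    by_cases h : ‖x‖ < R <;> simp [h]
  have hray : ∀ r : ℝ, r ^ (2 - 1) • (Set.Iio R).indicator f r
      = (Set.Iio R).indicator (fun r => r * f r) r := fun r => by
    by_cases h : r < R <;> simp [h]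
  rw [← integral_indicator measurableSet_ball, funext hball,
    integral_fun_norm_addHaar volume ((Set.Iio R).indicator f), finrank_euclideanSpace_fin,
    measureReal_def, EuclideanSpace.volume_ball_fin_two, funext hray,
    setIntegral_indicator measurableSet_Iio, Set.Ioi_inter_Iio,
    intervalIntegral.integral_of_le hR, integral_Ioc_eq_integral_Ioo]
  simp [ENNReal.toReal_ofReal pi_pos.le, mul_assoc]

section Bubble

variable {lam a r : ℝ}

theorem exp_Uval (hlam : lam ≠ 0) (ha : a ≠ 1) (hr : 0 ≤ r) :
    exp (Uval lam a r) = (lam * (1 - a)) ^ 2 / (1 + lam ^ 2 / 8 * r ^ (2 * (1 - a))) ^ 2 := by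
  have : lam * (1 - a) ≠ 0 := mul_ne_zero hlam (sub_ne_zero.2 (Ne.symm ha))
  exact exp_log (by positivity)

theorem hasDerivAt_bubble_primitive (hlam : lam ≠ 0) (ha : a ≠ 1) (hr : 0 < r) :
    HasDerivAt (fun r => -(4 * (1 - a)) / (1 + lam ^ 2 / 8 * r ^ (2 * (1 - a))))
      (r ^ (1 - 2 * a) * exp (Uval lam a r)) r := by
  have hD := ((hasDerivAt_rpow_const (p := 2 * (1 - a)) (Or.inl hr.ne')).const_mul
    (lam ^ 2 / 8)).const_add 1
  have hD_pos : 0 < 1 + lam ^ 2 / 8 * r ^ (2 * (1 - a)) := by positivity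
  refine ((hasDerivAt_const r (-(4 * (1 - a)))).div hD hD_pos.ne').congr_deriv ?_
  rw [exp_Uval hlam ha hr.le, show 2 * (1 - a) - 1 = 1 - 2 * a by ring]
  field_simp
  ring

theorem integral_rpow_mul_exp_Uval {R : ℝ} (hlam : lam ≠ 0) (ha : a < 1) (hR : 0 ≤ R) :
    ∫ r in (0:ℝ)..R, r ^ (1 - 2 * a) * exp (Uval lam a r)
      = 4 * (1 - a) * (lam ^ 2 / 8 * R ^ (2 * (1 - a)))
          / (1 + lam ^ 2 / 8 * R ^ (2 * (1 - a))) := by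
  have hcont : ContinuousOn (fun r => -(4 * (1 - a)) / (1 + lam ^ 2 / 8 * r ^ (2 * (1 - a))))
      (Set.Icc 0 R) :=
    continuousOn_const.div (continuousOn_const.add
        (continuousOn_const.mul (continuous_rpow_const (by linarith)).continuousOn))
      fun r hr => by have := hr.1; positivity
  have hderiv : ∀ r ∈ Set.Ioo 0 R, HasDerivAt
      (fun r => -(4 * (1 - a)) / (1 + lam ^ 2 / 8 * r ^ (2 * (1 - a))))
      (r ^ (1 - 2 * a) * exp (Uval lam a r)) r :=
    fun r hr => hasDerivAt_bubble_primitive hlam ha.ne hr.1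
  have hint : IntervalIntegrable (fun r => r ^ (1 - 2 * a) * exp (Uval lam a r)) volume 0 R := by
    refine intervalIntegral.intervalIntegrable_deriv_of_nonneg (by rwa [Set.uIcc_of_le hR])
      (by rwa [min_eq_left hR, max_eq_right hR]) fun r hr => ?_
    rw [min_eq_left hR] at hr
    exact mul_nonneg (rpow_nonneg hr.1.le _) (exp_pos _).le
  rw [intervalIntegral.integral_eq_sub_of_hasDerivAt_of_le hR hcont hderiv hint,
    zero_rpow (by linarith)]
  field_simp
  ring

theorem integral_ball_rpow_mul_exp_U {R : ℝ} (hlam : lam ≠ 0) (ha : a < 1) (hR : 0 ≤ R) :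
    ∫ x in ball (0 : Pl) R, ‖x‖ ^ (-(2 * a)) * exp (U lam a x)
      = 2 * π * (4 * (1 - a) * (lam ^ 2 / 8 * R ^ (2 * (1 - a)))
          / (1 + lam ^ 2 / 8 * R ^ (2 * (1 - a)))) := by
  rw [← integral_rpow_mul_exp_Uval hlam ha hR]
  refine (integral_ball_fun_norm_eq hR fun r => r ^ (-(2 * a)) * exp (Uval lam a r)).trans ?_
  congr 1
  refine intervalIntegral.integral_congr_ae (Eventually.of_forall fun r hr => ?_)
  rw [Set.uIoc_of_le hR] at hr
  rw [← mul_assoc, show 1 - 2 * a = 1 + -(2 * a) by ring, rpow_add hr.1, rpow_one]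

end Bubble

theorem rpow_eq_of_Uval_eq {lam1 lam2 a R : ℝ} (h1 : 0 < lam1) (h12 : lam1 < lam2) (ha : a < 1)
    (hR : 0 ≤ R) (hval : Uval lam1 a R = Uval lam2 a R) :
    R ^ (2 * (1 - a)) = 8 / (lam1 * lam2) := by
  have h2 : 0 < lam2 := h1.trans h12
  have hβ : 0 < 1 - a := sub_pos.2 ha
  have hexp := congrArg exp hval
  rw [exp_Uval h1.ne' ha.ne hR, exp_Uval h2.ne' ha.ne hR,
    div_eq_div_iff (by positivity) (by positivity), ← mul_pow, ← mul_pow] at hexp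
  have hlin := (sq_eq_sq₀ (by positivity) (by positivity)).1 hexp
  have hprod : (lam2 - lam1) * ((1 - a) * (lam1 * lam2 * R ^ (2 * (1 - a)) - 8)) = 0 := by
    linear_combination 8 * hlin
  have := (mul_eq_zero.1 hprod).resolve_left (sub_ne_zero.2 h12.ne')
  field_simp
  linarith [(mul_eq_zero.1 this).resolve_left hβ.ne']

namespace InteriorBol

variable {a R : ℝ} {g : ℝ → ℝ}

theorem intervalIntegrable (hg : InteriorBol a R g) (ha : a < 1) (hR : 0 ≤ R) :
    IntervalIntegrable (fun s => s ^ (1 - 2 * a) * exp (g s)) volume 0 R :=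
  (intervalIntegral.intervalIntegrable_rpow' (by linarith)).mul_continuousOn
    (by rw [Set.uIcc_of_le hR]; exact continuous_exp.comp_continuousOn hg.1)

theorem continuousOn_integral (hg : InteriorBol a R g) (ha : a < 1) (hR : 0 ≤ R) :
    ContinuousOn (fun r => ∫ s in (0:ℝ)..r, s ^ (1 - 2 * a) * exp (g s)) (Set.Icc 0 R) := by
  simpa only [Set.uIcc_of_le hR] using
    intervalIntegral.continuousOn_primitive_interval' (hg.intervalIntegrable ha hR)
      Set.left_mem_uIcc

theorem hasDerivAt_integral (hg : InteriorBol a R g) (ha : a < 1) {r : ℝ}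
    (hr : r ∈ Set.Ioo 0 R) :
    HasDerivAt (fun r => ∫ s in (0:ℝ)..r, s ^ (1 - 2 * a) * exp (g s))
      (r ^ (1 - 2 * a) * exp (g r)) r := by
  have hcont : ∀ r ∈ Set.Ioo 0 R, ContinuousAt (fun s => s ^ (1 - 2 * a) * exp (g s)) r :=
    fun r hr =>
      (continuousAt_rpow_const _ _ (Or.inl hr.1.ne')).mul (hg.2.2.1 r hr).continuousAt.rexp
  exact intervalIntegral.integral_hasDerivAt_right
    ((hg.intervalIntegrable ha (hr.1.trans hr.2).le).mono_set
      (Set.uIcc_subset_uIcc_left (Set.mem_uIcc_of_le hr.1.le hr.2.le)))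
    (ContinuousAt.stronglyMeasurableAtFilter isOpen_Ioo hcont r hr) (hcont r hr)

theorem integral_mul_sub_le (hg : InteriorBol a R g) (ha : a < 1) (hR : 0 ≤ R) :
    (∫ s in (0:ℝ)..R, s ^ (1 - 2 * a) * exp (g s))
        * (4 * (1 - a) - ∫ s in (0:ℝ)..R, s ^ (1 - 2 * a) * exp (g s))
      ≤ 2 * R ^ (2 * (1 - a)) * exp (g R) := by
  have hN_cont := hg.continuousOn_integral ha hR
  have hN_deriv := fun r (hr : r ∈ Set.Ioo 0 R) => hg.hasDerivAt_integral ha hr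
  obtain ⟨hg_cont, -, hg_diff, hg_bol⟩ := hg
  set f : ℝ → ℝ := fun s => s ^ (1 - 2 * a) * exp (g s)
  set N : ℝ → ℝ := fun r => ∫ s in (0:ℝ)..r, f s with hN
  set E : ℝ → ℝ := fun r => 2 * r ^ (2 * (1 - a)) * exp (g r) - N r * (4 * (1 - a) - N r)
    with hE
  have hE_cont : ContinuousOn E (Set.Icc 0 R) :=
    ((continuousOn_const.mul (continuous_rpow_const (by linarith)).continuousOn).mul
      (continuous_exp.comp_continuousOn hg_cont)).sub
      (hN_cont.mul (continuousOn_const.sub hN_cont))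
  have hE_deriv : ∀ r ∈ Set.Ioo 0 R,
      HasDerivAt E (2 * f r * (r * deriv g r + N r)) r := by
    intro r hr
    have hpow := hasDerivAt_rpow_const (p := 2 * (1 - a)) (Or.inl hr.1.ne')
    refine (((hpow.const_mul 2).mul (hg_diff r hr).hasDerivAt.exp).sub
      ((hN_deriv r hr).mul ((hN_deriv r hr).const_sub _))).congr_deriv ?_
    have hsplit : r ^ (2 * (1 - a)) = r * r ^ (1 - 2 * a) := by
      rw [show 2 * (1 - a) = 1 + (1 - 2 * a) by ring, rpow_add hr.1, rpow_one]
    rw [hsplit, show 2 * (1 - a) - 1 = 1 - 2 * a by ring]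
    ring
  have hE_mono : MonotoneOn E (Set.Icc 0 R) := by
    refine monotoneOn_of_hasDerivWithinAt_nonneg (f' := fun r => 2 * f r * (r * deriv g r + N r))
      (convex_Icc 0 R) hE_cont (fun r hr => ?_) fun r hr => ?_ <;> rw [interior_Icc] at hr
    · exact (hE_deriv r hr).hasDerivWithinAt
    · have hNr : 0 ≤ r * deriv g r + N r := by nlinarith [hg_bol r hr, pi_pos]
      have hfr : 0 ≤ f r := mul_nonneg (rpow_nonneg hr.1.le _) (exp_pos _).le
      exact mul_nonneg (mul_nonneg zero_le_two hfr) hNr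
  have hE_zero : E 0 = 0 := by
    simp [hE, hN, zero_rpow (show 2 * (1 - a) ≠ 0 by linarith)]
  have := hE_mono (Set.left_mem_Icc.2 hR) (Set.right_mem_Icc.2 hR) hR
  rw [hE_zero] at this
  linarith

end InteriorBol

theorem le_or_le_of_mul_sub_le_mul {x p q : ℝ} (h : x * (p + q - x) ≤ p * q) :
    x ≤ p ∨ q ≤ x := by
  by_contra! hx
  nlinarith [mul_pos (sub_pos.2 hx.1) (sub_pos.2 hx.2)]

/-- Mass dichotomy (Lemma 2.5): either `M ≤ m₁` or `M ≥ m₂`. -/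
theorem mass_dichotomy (a R lam1 lam2 : ℝ) (ha : a ∈ Set.Ico (0:ℝ) 1) (hR : 0 < R)
    (h1 : 0 < lam1) (h12 : lam1 < lam2)
    (hval : Uval lam1 a R = Uval lam2 a R)
    (g : ℝ → ℝ) (hg : InteriorBol a R g) (hgR : g R = Uval lam1 a R) :
    (2 * π * ∫ s in (0:ℝ)..R, s ^ (1 - 2*a) * Real.exp (g s))
        ≤ ∫ x in ball (0 : Pl) R, ‖x‖ ^ (-(2*a)) * Real.exp (U lam1 a x) ∨
    (2 * π * ∫ s in (0:ℝ)..R, s ^ (1 - 2*a) * Real.exp (g s))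
        ≥ ∫ x in ball (0 : Pl) R, ‖x‖ ^ (-(2*a)) * Real.exp (U lam2 a x) := by
  have ha1 : a < 1 := ha.2
  have h2 : 0 < lam2 := h1.trans h12
  have hc := rpow_eq_of_Uval_eq h1 h12 ha1 hR.le hval
  have hbol := hg.integral_mul_sub_le ha1 hR.le
  rw [hgR, exp_Uval h1.ne' ha1.ne hR.le, hc] at hbol
  rw [integral_ball_rpow_mul_exp_U h1.ne' ha1 hR.le, integral_ball_rpow_mul_exp_U h2.ne' ha1 hR.le,
    hc]
  set N := ∫ s in (0:ℝ)..R, s ^ (1 - 2 * a) * exp (g s)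
  set mu1 := 4 * (1 - a) * lam1 / (lam1 + lam2) with hmu1
  set mu2 := 4 * (1 - a) * lam2 / (lam1 + lam2) with hmu2
  have hmass1 : 4 * (1 - a) * (lam1 ^ 2 / 8 * (8 / (lam1 * lam2)))
      / (1 + lam1 ^ 2 / 8 * (8 / (lam1 * lam2))) = mu1 := by
    rw [hmu1]; field_simp; ring
  have hmass2 : 4 * (1 - a) * (lam2 ^ 2 / 8 * (8 / (lam1 * lam2)))
      / (1 + lam2 ^ 2 / 8 * (8 / (lam1 * lam2))) = mu2 := by
    rw [hmu2]; field_simp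
  have hquad : N * (mu1 + mu2 - N) ≤ mu1 * mu2 := by
    convert hbol using 1
    · rw [hmu1, hmu2]; field_simp
    · rw [hmu1, hmu2]; field_simp; ring
  rw [hmass1, hmass2]
  rcases le_or_le_of_mul_sub_le_mul hquad with h | h
  · exact Or.inl (mul_le_mul_of_nonneg_left h (by positivity))
  · exact Or.inr (mul_le_mul_of_nonneg_left h (by positivity))
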